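/- arXiv:2405.19703 — 3 statements merged into one kernel-verified Lean document; each statement's English description precedes it below -/
import Mathlib

section
/- Let a < b be real numbers, N ≥ 1 a natural number, and let R_1, …, R_N be independent random variables each uniformly distributed on [a, b]. Then for every δ ∈ (0, 1), with probability at least 1 − δ², |max_{1 ≤ n ≤ N} R_n − (a + N·b)/(N + 1)| ≤ (b − a)/(N·δ). -/
/-!
Almost surely every `R n` lies in `[a, b]`, so the maximum is at most `b`, which is within
`t = (b - a) / (N δ)` of the centre `m = (a + N b) / (N + 1)`. The maximum can therefore only miss
the window when all `R n` fall below `c = m - t`, an event of probability `x ^ N` with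
`x = (c - a) / (b - a)` by independence. Since `N (1 - x) ≥ 1 / δ`, this is at most
`exp (-N (1 - x)) ≤ exp (-1 / δ) ≤ δ ^ 2`.
-/

open MeasureTheory ProbabilityTheory Set

lemma Real.sq_le_exp {u : ℝ} (hu : 0 ≤ u) : u ^ 2 ≤ Real.exp u := by
  have h := Real.sum_le_exp_of_nonneg hu 4
  norm_num [Finset.sum_range_succ, Nat.factorial] at h
  nlinarith [sq_nonneg (u - 1), sq_nonneg (u - 2)]

lemma ENNReal.ofReal_pow_le_ofReal_sq {x δ : ℝ} {N : ℕ} (hN : N ≠ 0) (hδ : 0 < δ)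
    (h : δ⁻¹ ≤ N * (1 - x)) : ENNReal.ofReal x ^ N ≤ ENNReal.ofReal (δ ^ 2) := by
  rcases le_total x 0 with hx | hx
  · simp [ENNReal.ofReal_eq_zero.2 hx, zero_pow hN]
  rw [← ENNReal.ofReal_pow hx]
  refine ENNReal.ofReal_le_ofReal ?_
  calc x ^ N ≤ Real.exp (-(1 - x)) ^ N :=
        pow_le_pow_left₀ hx (by linarith [Real.add_one_le_exp (-(1 - x))]) N
    _ = Real.exp (-(N * (1 - x))) := by rw [← Real.exp_nat_mul, mul_neg]
    _ ≤ Real.exp (-δ⁻¹) := Real.exp_le_exp.2 (neg_le_neg h)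
    _ = (Real.exp δ⁻¹)⁻¹ := Real.exp_neg _
    _ ≤ ((δ⁻¹) ^ 2)⁻¹ := by gcongr; exact Real.sq_le_exp (by positivity)
    _ = δ ^ 2 := by rw [inv_pow, inv_inv]

lemma right_mem_Icc_sub_add {a b N δ : ℝ} (hab : a ≤ b) (hN : 0 < N) (hδ0 : 0 < δ)
    (hδ1 : δ ≤ 1) :
    b ∈ Icc ((a + N * b) / (N + 1) - (b - a) / (N * δ))
      ((a + N * b) / (N + 1) + (b - a) / (N * δ)) := by
  have hcentre : b - (a + N * b) / (N + 1) = (b - a) / (N + 1) := by field_simp; ring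
  have hwidth : (b - a) / (N + 1) ≤ (b - a) / (N * δ) :=
    div_le_div_of_nonneg_left (by linarith) (by positivity) (by nlinarith)
  constructor <;> linarith [show 0 ≤ (b - a) / (N + 1) by bound]

lemma abs_ciSup_sub_le {ι : Type*} [Finite ι] [Nonempty ι] {f : ι → ℝ} {b m t : ℝ}
    (hf : ∀ i, f i ≤ b) (hb : b ≤ m + t) (h : ∃ i, m - t ≤ f i) : |(⨆ i, f i) - m| ≤ t := by
  obtain ⟨i, hi⟩ := h
  have hlow : f i ≤ ⨆ i, f i := le_ciSup (finite_range f).bddAbove i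
  have hup : (⨆ i, f i) ≤ b := ciSup_le hf
  rw [abs_sub_le_iff]
  constructor <;> linarith

lemma MeasureTheory.pdf.IsUniform.ae_mem {Ω E : Type*} [MeasurableSpace Ω] [MeasurableSpace E]
    {P : Measure Ω} {μ : Measure E} {X : Ω → E} {s : Set E} (hns : μ s ≠ 0) (hnt : μ s ≠ ⊤)
    (hu : pdf.IsUniform X s P μ) (hs : MeasurableSet s) : ∀ᵐ ω ∂P, X ω ∈ s := by
  rw [ae_iff]
  exact hu.measure_preimage hns hnt hs.compl |>.trans (by simp)

section UniformIcc

variable {Ω : Type*} [MeasurableSpace Ω] {P : Measure Ω} {X : Ω → ℝ} {a b : ℝ}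

lemma MeasureTheory.pdf.isUniform_Icc_of_map_eq
    (hX : Measure.map X P = (ENNReal.ofReal (b - a))⁻¹ • volume.restrict (Icc a b)) :
    pdf.IsUniform X (Icc a b) P := by
  rw [pdf.IsUniform, hX, ProbabilityTheory.cond, Real.volume_Icc]

lemma MeasureTheory.pdf.IsUniform.ae_mem_Icc (hab : a < b) (hu : pdf.IsUniform X (Icc a b) P) :
    ∀ᵐ ω ∂P, X ω ∈ Icc a b :=
  hu.ae_mem (by simpa using hab) (by simp) measurableSet_Icc

lemma MeasureTheory.pdf.IsUniform.measure_preimage_Iio_Icc (hab : a < b)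
    (hu : pdf.IsUniform X (Icc a b) P) {c : ℝ} (hcb : c ≤ b) :
    P (X ⁻¹' Iio c) = ENNReal.ofReal ((c - a) / (b - a)) := by
  have hinter : Icc a b ∩ Iio c = Ico a c := by
    ext x
    simp only [mem_inter_iff, mem_Icc, mem_Iio, mem_Ico]
    constructor
    · rintro ⟨⟨hax, -⟩, hxc⟩; exact ⟨hax, hxc⟩
    · rintro ⟨hax, hxc⟩; exact ⟨⟨hax, by linarith⟩, hxc⟩
  rw [hu.measure_preimage (by simpa using hab) (by simp) measurableSet_Iio, Real.volume_Icc,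
    hinter, Real.volume_Ico, ENNReal.ofReal_div_of_pos (sub_pos.2 hab)]

end UniformIcc

lemma ProbabilityTheory.iIndepFun.measure_forall_lt_of_isUniform_Icc {Ω ι : Type*}
    [MeasurableSpace Ω] [Fintype ι] {P : Measure Ω} {R : ι → Ω → ℝ} {a b c : ℝ} (hab : a < b)
    (hcb : c ≤ b) (hu : ∀ i, pdf.IsUniform (R i) (Icc a b) P) (hindep : iIndepFun R P) :
    P {ω | ∀ i, R i ω < c} = ENNReal.ofReal ((c - a) / (b - a)) ^ Fintype.card ι := by
  have hinter : {ω | ∀ i, R i ω < c} = ⋂ i, R i ⁻¹' Iio c := by ext; simp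
  rw [hinter, hindep.meas_iInter fun i => ⟨Iio c, measurableSet_Iio, rfl⟩]
  simp [(hu _).measure_preimage_Iio_Icc hab hcb]

theorem concentration_max_iid_uniform
    {Ω : Type*} [MeasurableSpace Ω] (P : Measure Ω) [IsProbabilityMeasure P]
    (a b : ℝ) (hab : a < b) (N : ℕ) (hN : 1 ≤ N)
    (R : Fin N → Ω → ℝ) (hmeas : ∀ n, Measurable (R n))
    (hunif : ∀ n, Measure.map (R n) P
      = (ENNReal.ofReal (b - a))⁻¹ • volume.restrict (Set.Icc a b))
    (hindep : iIndepFun R P)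
    (δ : ℝ) (hδ : δ ∈ Set.Ioo (0 : ℝ) 1) :
    1 - δ ^ 2 ≤
      (P {ω | |(⨆ n, R n ω) - (a + N * b) / (N + 1)| ≤ (b - a) / (N * δ)}).toReal := by
  obtain ⟨hδ0, hδ1⟩ := hδ
  have hN0 : (0 : ℝ) < N := by exact_mod_cast hN
  have hu n : pdf.IsUniform (R n) (Icc a b) P := pdf.isUniform_Icc_of_map_eq (hunif n)
  set m := (a + N * b) / (N + 1)
  set t := (b - a) / (N * δ)
  obtain ⟨hcb, hbt⟩ := right_mem_Icc_sub_add hab.le hN0 hδ0 hδ1.le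
  have hdepth : N * (1 - (m - t - a) / (b - a)) = N / (N + 1) + δ⁻¹ := by
    have : b - a ≠ 0 := by linarith
    simp only [m, t]; field_simp; ring
  set F := {ω | ∀ n, R n ω < m - t}
  have hF : P.real F ≤ δ ^ 2 := by
    refine ENNReal.toReal_le_of_le_ofReal (sq_nonneg δ) ?_
    rw [hindep.measure_forall_lt_of_isUniform_Icc hab hcb hu, Fintype.card_fin]
    exact ENNReal.ofReal_pow_le_ofReal_sq (by omega) hδ0
      (by rw [hdepth]; linarith [show 0 ≤ (N : ℝ) / (N + 1) by positivity])
  have hFE : Fᶜ ≤ᵐ[P] {ω | |(⨆ n, R n ω) - m| ≤ t} := by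
    have : Nonempty (Fin N) := ⟨⟨0, hN⟩⟩
    filter_upwards [ae_all_iff.2 fun n => (hu n).ae_mem_Icc hab] with ω hω hωF
    exact abs_ciSup_sub_le (fun n => (hω n).2) hbt
      ((not_forall.1 hωF).imp fun _ => le_of_not_gt)
  calc 1 - δ ^ 2 ≤ 1 - P.real F := by linarith
    _ = P.real Fᶜ := (probReal_compl_eq_one_sub (by measurability)).symm
    _ ≤ _ := ENNReal.toReal_mono (measure_ne_top _ _) (measure_mono_ae hFE)
end

section
/- Let a < b be real numbers, N ≥ 1 a natural number, and let R_1, …, R_N be independent random variables each uniformly distributed on [a, b]. Then for every δ ∈ (0, 1), with probability at least 1 − δ², b ≤ ((N + 1)/N) · max_{1 ≤ n ≤ N} R_n + (b − a)(N + 1)/(N²·δ) − a/N. -/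
/-!
Put `t = (N b + a)/(N + 1) - (b - a)/(N δ)`. The event in question is exactly `t ≤ max_n R_n`,
so its complement is `∀ n, R_n < t`. By independence and uniformity this has probability at most
`c ^ N` with `c = (t - a)/(b - a) ≤ 1 - 1/(N δ)`, hence at most `exp (-1/δ)`, and
`exp (-1/δ) ≤ δ²` because `u² ≤ exp u` for `u ≥ 0`.
-/

open MeasureTheory ProbabilityTheory Set

namespace Real

theorem sq_le_exp_s8 {u : ℝ} (hu : 0 ≤ u) : u ^ 2 ≤ exp u := by
  have half : u ≤ exp (u / 2) := by
    nlinarith [quadratic_le_exp_of_nonneg (div_nonneg hu two_pos.le)]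
  calc u ^ 2 ≤ exp (u / 2) ^ 2 := pow_le_pow_left₀ hu half 2
    _ = exp u := by rw [← exp_nat_mul]; ring_nf

theorem exp_neg_inv_le_sq {δ : ℝ} (hδ : 0 < δ) : exp (-δ⁻¹) ≤ δ ^ 2 := by
  calc exp (-δ⁻¹) = (exp δ⁻¹)⁻¹ := exp_neg _
    _ ≤ ((δ⁻¹) ^ 2)⁻¹ := inv_anti₀ (by positivity) (sq_le_exp_s8 (inv_nonneg.2 hδ.le))
    _ = δ ^ 2 := by rw [inv_pow, inv_inv]

end Real

theorem ENNReal.ofReal_pow_le_exp {c x : ℝ} (n : ℕ) (h : c ≤ 1 - x) :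
    ENNReal.ofReal c ^ n ≤ ENNReal.ofReal (Real.exp (-(n * x))) := by
  have hc : c ≤ Real.exp (-x) := by linarith [Real.add_one_le_exp (-x)]
  calc ENNReal.ofReal c ^ n ≤ ENNReal.ofReal (Real.exp (-x)) ^ n :=
        pow_le_pow_left' (ENNReal.ofReal_le_ofReal hc) n
    _ = ENNReal.ofReal (Real.exp (-(n * x))) := by
        rw [← ENNReal.ofReal_pow (Real.exp_pos _).le, ← Real.exp_nat_mul]; ring_nf

theorem ciSup_lt_iff_of_finite {ι α : Type*} [Finite ι] [Nonempty ι]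
    [ConditionallyCompleteLinearOrder α] {f : ι → α} {t : α} :
    (⨆ i, f i) < t ↔ ∀ i, f i < t := by
  refine ⟨fun h i => (le_ciSup (Finite.bddAbove_range f) i).trans_lt h, fun h => ?_⟩
  obtain ⟨i, hi⟩ := exists_eq_ciSup_of_finite (f := f)
  exact hi ▸ h i

section Probability

variable {Ω : Type*} [MeasurableSpace Ω] {P : Measure Ω}

theorem one_sub_le_toReal_of_measure_compl_le [IsProbabilityMeasure P] {s : Set Ω} {ε : ℝ}
    (hε : 0 ≤ ε) (h : P sᶜ ≤ ENNReal.ofReal ε) : 1 - ε ≤ (P s).toReal := by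
  have hcover : 1 ≤ P.real s + P.real sᶜ := by
    simpa [union_compl_self] using measureReal_union_le (μ := P) s sᶜ
  have hcompl : P.real sᶜ ≤ ε := ENNReal.toReal_le_of_le_ofReal hε h
  rw [← measureReal_def]
  linarith

theorem ProbabilityTheory.iIndepFun.measure_iSup_lt_le {ι β : Type*} [Fintype ι] [Nonempty ι]
    [ConditionallyCompleteLinearOrder β] [TopologicalSpace β] [OrderClosedTopology β]
    [MeasurableSpace β] [OpensMeasurableSpace β] {X : ι → Ω → β} (hX : iIndepFun X P)
    {t : β} {p : ENNReal} (hp : ∀ i, P (X i ⁻¹' Iio t) ≤ p) :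
    P {ω | (⨆ i, X i ω) < t} ≤ p ^ Fintype.card ι := by
  have hinter : {ω | (⨆ i, X i ω) < t} = ⋂ i ∈ Finset.univ, X i ⁻¹' Iio t := by
    ext ω; simp [ciSup_lt_iff_of_finite]
  rw [hinter, hX.measure_inter_preimage_eq_mul _ fun _ _ => measurableSet_Iio]
  exact Finset.prod_le_pow_card _ _ _ fun i _ => hp i

theorem MeasureTheory.pdf.IsUniform.measure_preimage_Iio_le {X : Ω → ℝ} {a b : ℝ} (hab : a < b)
    (hX : pdf.IsUniform X (Icc a b) P) (t : ℝ) :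
    P (X ⁻¹' Iio t) ≤ ENNReal.ofReal ((t - a) / (b - a)) := by
  have hvol : volume (Icc a b) ≠ 0 := by simp [hab]
  rw [hX.measure_preimage hvol measure_Icc_lt_top.ne measurableSet_Iio, Real.volume_Icc,
    ENNReal.ofReal_div_of_pos (sub_pos.2 hab), ← Real.volume_Ico (a := a) (b := t)]
  have hsub : Icc a b ∩ Iio t ⊆ Ico a t := fun x hx => ⟨hx.1.1, hx.2⟩
  exact ENNReal.div_le_div_right (measure_mono (μ := volume) hsub) _

end Probability

theorem le_bound_iff_threshold_le {a b x δ M : ℝ} (hx : 0 < x) (hδ : 0 < δ) :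
    b ≤ ((x + 1) / x) * M + (b - a) * (x + 1) / (x ^ 2 * δ) - a / x ↔
      (x * b + a) / (x + 1) - (b - a) / (x * δ) ≤ M := by
  have hfactor : ((x + 1) / x) * M + (b - a) * (x + 1) / (x ^ 2 * δ) - a / x - b
      = ((x + 1) / x) * (M - ((x * b + a) / (x + 1) - (b - a) / (x * δ))) := by
    field_simp; ring
  rw [← sub_nonneg, hfactor, mul_nonneg_iff_of_pos_left (by positivity), sub_nonneg]

theorem threshold_normalized_le {a b x δ : ℝ} (hab : a < b) (hx : 0 < x) (hδ : 0 < δ) :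
    ((x * b + a) / (x + 1) - (b - a) / (x * δ) - a) / (b - a) ≤ 1 - 1 / (x * δ) := by
  have hba : b - a ≠ 0 := (sub_pos.2 hab).ne'
  have hnorm : ((x * b + a) / (x + 1) - (b - a) / (x * δ) - a) / (b - a)
      = x / (x + 1) - 1 / (x * δ) := by
    field_simp; ring
  have hfrac : x / (x + 1) ≤ 1 := (div_le_one (by linarith)).2 (by linarith)
  linarith

theorem upper_bound_sup_risk_iid_uniform_general
    {Ω : Type*} [MeasurableSpace Ω] (P : Measure Ω) [IsProbabilityMeasure P]
    (a b : ℝ) (hab : a < b) (N : ℕ) (hN : 1 ≤ N)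
    (R : Fin N → Ω → ℝ)
    (hunif : ∀ n, Measure.map (R n) P
      = (ENNReal.ofReal (b - a))⁻¹ • volume.restrict (Set.Icc a b))
    (hindep : iIndepFun R P)
    (δ : ℝ) (hδ : δ ∈ Set.Ioo (0 : ℝ) 1) :
    1 - δ ^ 2 ≤
      (P {ω | b ≤ ((N + 1) / N) * (⨆ n, R n ω)
        + (b - a) * (N + 1) / (N ^ 2 * δ) - a / N}).toReal := by
  have hNpos : (0 : ℝ) < N := by exact_mod_cast hN
  have : Nonempty (Fin N) := ⟨⟨0, hN⟩⟩
  set t : ℝ := (N * b + a) / (N + 1) - (b - a) / (N * δ)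
  have hevent : {ω | b ≤ ((N + 1) / N) * (⨆ n, R n ω)
      + (b - a) * (N + 1) / (N ^ 2 * δ) - a / N} = {ω | (⨆ n, R n ω) < t}ᶜ := by
    ext ω; simp [le_bound_iff_threshold_le hNpos hδ.1, t]
  have huniform : ∀ n, pdf.IsUniform (R n) (Icc a b) P := fun n => by
    rw [pdf.IsUniform, ProbabilityTheory.cond, Real.volume_Icc]; exact hunif n
  have hmax : P {ω | (⨆ n, R n ω) < t} ≤ ENNReal.ofReal (δ ^ 2) :=
    calc P {ω | (⨆ n, R n ω) < t} ≤ ENNReal.ofReal ((t - a) / (b - a)) ^ N := by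
          simpa using hindep.measure_iSup_lt_le fun n => (huniform n).measure_preimage_Iio_le hab t
      _ ≤ ENNReal.ofReal (Real.exp (-(N * (1 / (N * δ))))) :=
          ENNReal.ofReal_pow_le_exp N (threshold_normalized_le hab hNpos hδ.1)
      _ = ENNReal.ofReal (Real.exp (-δ⁻¹)) := by field_simp
      _ ≤ ENNReal.ofReal (δ ^ 2) := ENNReal.ofReal_le_ofReal (Real.exp_neg_inv_le_sq hδ.1)
  rw [hevent]
  exact one_sub_le_toReal_of_measure_compl_le (sq_nonneg δ) (by rwa [compl_compl])

theorem upper_bound_sup_risk_iid_uniform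
    {Ω : Type*} [MeasurableSpace Ω] (P : Measure Ω) [IsProbabilityMeasure P]
    (a b : ℝ) (hab : a < b) (N : ℕ) (hN : 1 ≤ N)
    (R : Fin N → Ω → ℝ) (hmeas : ∀ n, Measurable (R n))
    (hunif : ∀ n, Measure.map (R n) P
      = (ENNReal.ofReal (b - a))⁻¹ • volume.restrict (Set.Icc a b))
    (hindep : iIndepFun R P)
    (δ : ℝ) (hδ : δ ∈ Set.Ioo (0 : ℝ) 1) :
    1 - δ ^ 2 ≤
      (P {ω | b ≤ ((N + 1) / N) * (⨆ n, R n ω)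
        + (b - a) * (N + 1) / (N ^ 2 * δ) - a / N}).toReal :=
  upper_bound_sup_risk_iid_uniform_general P a b hab N hN R hunif hindep δ hδ
end

section
/- Let E be a nonempty finite set, let R : E → ℝ, and let S ⊆ E be a nonempty subset with |S| = N > 2. Let a = min_{e ∈ E} R(e) and b = max_{e ∈ E} R(e). Suppose max_{e ∈ S} R(e) ≥ b − (b − a)/N and min_{e ∈ S} R(e) ≤ a + (b − a)/N. Then max_{e ∈ E} R(e) ≤ max_{e ∈ S} R(e) + (1/(N − 2))·(max_{e ∈ S} R(e) − min_{e ∈ S} R(e)). -/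
/-- Worst+gap upper bound: under the range assumptions on the sample maximum and minimum,
the worst-case risk over all environments is bounded by the worst error over the given
environments plus `1/(N-2)` times the gap. -/
theorem worst_plus_gap_bound
    {E : Type*} [Fintype E] [Nonempty E] (R : E → ℝ)
    (S : Finset E) (hS : S.Nonempty) (N : ℕ) (hcard : S.card = N) (hN : 2 < N)
    (a b : ℝ)
    (ha : a = Finset.univ.inf' Finset.univ_nonempty R)
    (hb : b = Finset.univ.sup' Finset.univ_nonempty R)
    (hmax : S.sup' hS R ≥ b - (b - a) / N)
    (hmin : S.inf' hS R ≤ a + (b - a) / N) :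
    Finset.univ.sup' Finset.univ_nonempty R
      ≤ S.sup' hS R + (1 / ((N : ℝ) - 2)) * (S.sup' hS R - S.inf' hS R) := by
  have hNpos : (0:ℝ) < N := by positivity
  have hN2 : (2:ℝ) < N := by exact_mod_cast hN
  have hMb : S.sup' hS R ≤ b := by
    rw [hb]
    exact Finset.sup'_mono R (Finset.subset_univ S) hS
  have ham : a ≤ S.inf' hS R := by
    rw [ha]
    exact Finset.inf'_mono R (Finset.subset_univ S) hS
  rw [← hb]
  have hd : (b - a) / (N:ℝ) * N = b - a := div_mul_cancel₀ _ (ne_of_gt hNpos)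
  have key : (b - a) * ((N:ℝ) - 2) ≤ (S.sup' hS R - S.inf' hS R) * N := by
    nlinarith [hd, hmax, hmin]
  have h3 : (b - a) / (N:ℝ) ≤ (S.sup' hS R - S.inf' hS R) / ((N:ℝ) - 2) := by
    rw [div_le_div_iff₀ hNpos (by linarith)]
    linarith
  have h4 : 1 / ((N:ℝ) - 2) * (S.sup' hS R - S.inf' hS R)
      = (S.sup' hS R - S.inf' hS R) / ((N:ℝ) - 2) := by ring
  linarith
end
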